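/- If A is a summand-ideal of the pseudo MV-algebra M = Γ(G,u), then there is a unique Boolean element a ∈ A such that A = ↓a. -/

import Mathlib

variable {G : Type*} [Lattice G] [AddGroup G]
  [CovariantClass G G (· + ·) (· ≤ ·)]
  [CovariantClass G G (Function.swap (· + ·)) (· ≤ ·)]

/-- `u` is a strong unit of the lattice-ordered group `G`. -/
def IsStrongUnit (u : G) : Prop := 0 ≤ u ∧ ∀ x : G, ∃ n : ℕ, x ≤ n • u

/-- The operation `x ⊕ y := (x + y) ⊓ u` of the pseudo MV-algebra `Γ(G,u)`. -/
def oplus (u x y : G) : G := (x + y) ⊓ u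

/-- The operation `x ⊙ y := (x - u + y) ⊔ 0` of the pseudo MV-algebra `Γ(G,u)`. -/
def odot (u x y : G) : G := (x - u + y) ⊔ 0

/-- `n.x := x ⊕ ⋯ ⊕ x` (`n` summands), with `0.x = 0`. -/
def nOplus (u : G) : ℕ → G → G
  | 0, _ => 0
  | n + 1, x => oplus u (nOplus u n x) x

/-- `I` is an ideal of the pseudo MV-algebra with carrier `C ⊆ Γ(G,u)`:
a nonempty subset of `C`, downward closed within `C`, and closed under `⊕`. -/
def IsIdealIn (u : G) (C I : Set G) : Prop :=
  I ⊆ C ∧ I.Nonempty ∧ (∀ x ∈ I, ∀ y ∈ C, y ≤ x → y ∈ I) ∧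
    ∀ x ∈ I, ∀ y ∈ I, oplus u x y ∈ I

/-- `I` is a normal ideal: `x ⊕ I = I ⊕ x` for all `x ∈ C`. -/
def IsNormalIdealIn (u : G) (C I : Set G) : Prop :=
  IsIdealIn u C I ∧ ∀ x ∈ C, (fun i => oplus u x i) '' I = (fun i => oplus u i x) '' I

/-- `⟨X⟩_n`, the smallest normal ideal (of the carrier `C`) containing `X`. -/
def normalGenIn (u : G) (C X : Set G) : Set G :=
  ⋂₀ {I | IsNormalIdealIn u C I ∧ X ⊆ I}

/-- The polar `X^⊥ = {y ∈ C : y ∧ x = 0 for all x ∈ X}` computed in carrier `C`. -/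
def polarIn (C X : Set G) : Set G := {y ∈ C | ∀ x ∈ X, y ⊓ x = 0}

/-- `A ⊕ B := {a ⊕ b : a ∈ A, b ∈ B}`. -/
def setOplus (u : G) (A B : Set G) : Set G := Set.image2 (oplus u) A B

/-- `↓a` computed within the carrier `C`. -/
def dsetIn (C : Set G) (a : G) : Set G := {x ∈ C | x ≤ a}

/-- `I` is a summand-ideal of the carrier `C`: a normal ideal such that for
some normal ideal `J`, `I ∩ J = {0}` and `⟨I ∪ J⟩_n = C`. -/
def IsSummandIdealIn (u : G) (C I : Set G) : Prop :=
  IsNormalIdealIn u C I ∧ ∃ J, IsNormalIdealIn u C J ∧ I ∩ J = {0} ∧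
    normalGenIn u C (I ∪ J) = C

/-- `I` is a polar ideal of the carrier `C`: `I = I^⊥⊥`. -/
def IsPolarIdealIn (C I : Set G) : Prop := polarIn C (polarIn C I) = I

/-- `a` is a Boolean element of the carrier `C`: `a ∈ C` and `a ⊕ a = a`. -/
def IsBooleanIn (u : G) (C : Set G) (a : G) : Prop := a ∈ C ∧ oplus u a a = a

/-- The carrier `C` is strongly projectable: every polar ideal is a summand-ideal. -/
def IsStronglyProjectableIn (u : G) (C : Set G) : Prop :=
  ∀ I : Set G, IsPolarIdealIn C I → IsSummandIdealIn u C I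

/-- `N` is a subalgebra of `Γ(G,u)`: contains `0` and `u`, closed under `⊕`,
`x⁻ = u - x` and `x∼ = -x + u`. -/
def IsSubalg (u : G) (N : Set G) : Prop :=
  N ⊆ Set.Icc 0 u ∧ 0 ∈ N ∧ u ∈ N ∧
    (∀ x ∈ N, ∀ y ∈ N, oplus u x y ∈ N) ∧
    (∀ x ∈ N, u - x ∈ N) ∧ (∀ x ∈ N, -x + u ∈ N)

/-- `N` is a large subalgebra of `Γ(G,u)`: for every nonzero `y ∈ Γ(G,u)` there
are `n ∈ ℕ` and a nonzero `x ∈ N` with `x ≤ n.y`. -/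
def IsLargeSubalg (u : G) (N : Set G) : Prop :=
  IsSubalg u N ∧ ∀ y ∈ Set.Icc (0 : G) u, y ≠ 0 →
    ∃ n : ℕ, ∃ x ∈ N, x ≠ 0 ∧ x ≤ nOplus u n y

/-!
Normality of `A` and of its complement `B` lets an element `x` be moved across `a ⊕ b`
(`x ⊕ (a ⊕ b) = (a' ⊕ b') ⊕ x` and symmetrically), so the elements below some `a ⊕ b` with
`a ∈ A`, `b ∈ B` form a normal ideal containing `A ∪ B`. It therefore contains
`⟨A ∪ B⟩_n = M ∋ u`, which gives `u ≤ a + b`. Since `A ∩ B = {0}`, every `x ∈ A` satisfies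
`x ∧ b = 0`, and then `x ≤ a + b` forces `x ≤ a`; thus `A = ↓a`, and
`a ⊕ a ≤ (a + a) ∧ (a + b) = a + (a ∧ b) = a` makes `a` Boolean.
-/

open Set

section PseudoMV

variable {α : Type*} [Lattice α] [AddGroup α] {u : α}

lemma oplus_le_oplus [AddLeftMono α] [AddRightMono α] {x x' y y' : α} (hx : x ≤ x')
    (hy : y ≤ y') : oplus u x y ≤ oplus u x' y' :=
  inf_le_inf_right u (add_le_add hx hy)

lemma oplus_le_add (x y : α) : oplus u x y ≤ x + y := inf_le_left

lemma oplus_le_unit (x y : α) : oplus u x y ≤ u := inf_le_right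

lemma le_oplus_of_nonneg_right [AddLeftMono α] {x y : α} (hx : x ≤ u) (hy : 0 ≤ y) :
    x ≤ oplus u x y :=
  le_inf (le_add_of_nonneg_right hy) hx

lemma le_oplus_of_nonneg_left [AddRightMono α] {x y : α} (hx : 0 ≤ x) (hy : y ≤ u) :
    y ≤ oplus u x y :=
  le_inf (le_add_of_nonneg_left hx) hy

lemma oplus_mem_Icc [AddLeftMono α] {x y : α} (hu : 0 ≤ u) (hx : 0 ≤ x) (hy : 0 ≤ y) :
    oplus u x y ∈ Icc 0 u :=
  ⟨le_inf (add_nonneg hx hy) hu, oplus_le_unit x y⟩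

lemma oplus_oplus_of_nonneg_right [AddLeftMono α] [AddRightMono α] {x y z : α} (hz : 0 ≤ z) :
    oplus u (oplus u x y) z = (x + y + z) ⊓ u := by
  rw [oplus, oplus, inf_add, inf_assoc, inf_eq_right.2 (le_add_of_nonneg_right hz)]

lemma oplus_oplus_of_nonneg_left [AddLeftMono α] [AddRightMono α] {x y z : α} (hx : 0 ≤ x) :
    oplus u x (oplus u y z) = (x + y + z) ⊓ u := by
  rw [oplus, oplus, add_inf, inf_assoc, inf_eq_right.2 (le_add_of_nonneg_left hx), add_assoc]

lemma oplus_assoc_of_nonneg [AddLeftMono α] [AddRightMono α] {x y z : α} (hx : 0 ≤ x)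
    (hz : 0 ≤ z) : oplus u (oplus u x y) z = oplus u x (oplus u y z) := by
  rw [oplus_oplus_of_nonneg_right hz, oplus_oplus_of_nonneg_left hx]

lemma exists_oplus_right_eq [AddLeftMono α] [AddRightMono α] {x y c : α} (hx : x ∈ Icc 0 u)
    (hxy : x ≤ y) (hyc : y ≤ oplus u c x) : ∃ j ∈ Icc 0 u, j ≤ c ∧ oplus u j x = y := by
  have hyu : y ≤ u := hyc.trans (oplus_le_unit c x)
  refine ⟨y - x, ⟨sub_nonneg.2 hxy, ?_⟩,
    sub_le_iff_le_add.2 (hyc.trans (oplus_le_add c x)), ?_⟩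
  · exact (sub_le_sub_right hyu x).trans (sub_le_self u hx.1)
  · rw [oplus, sub_add_cancel, inf_eq_left.2 hyu]

lemma exists_oplus_left_eq [AddLeftMono α] [AddRightMono α] {x y c : α} (hx : x ∈ Icc 0 u)
    (hxy : x ≤ y) (hyc : y ≤ oplus u x c) : ∃ j ∈ Icc 0 u, j ≤ c ∧ oplus u x j = y := by
  have hyu : y ≤ u := hyc.trans (oplus_le_unit x c)
  refine ⟨-x + y, ⟨le_neg_add_iff_le.2 hxy, ?_⟩,
    neg_add_le_iff_le_add.2 (hyc.trans (oplus_le_add x c)), ?_⟩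
  · exact neg_add_le_iff_le_add.2 (hyu.trans (le_add_of_nonneg_left hx.1))
  · rw [oplus, add_neg_cancel_left, inf_eq_left.2 hyu]

lemma le_of_le_add_of_inf_eq_zero [AddLeftMono α] [AddRightMono α] {a b x : α} (ha : 0 ≤ a)
    (hx : x ≤ a + b) (hxb : x ⊓ b = 0) : x ≤ a := by
  have h : -a + x ≤ x ⊓ b :=
    le_inf (neg_add_le_iff_le_add.2 (le_add_of_nonneg_left ha)) (neg_add_le_iff_le_add.2 hx)
  rw [hxb] at h
  exact neg_add_nonpos_iff.1 h

lemma oplus_self_eq_self_of_le_add [AddLeftMono α] [AddRightMono α] {a b : α} (ha : 0 ≤ a)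
    (hau : a ≤ u) (hu : u ≤ a + b) (hab : a ⊓ b = 0) : oplus u a a = a :=
  le_antisymm
    (calc oplus u a a ≤ (a + a) ⊓ (a + b) := inf_le_inf_left _ hu
      _ = a := by rw [← add_inf, hab, add_zero])
    (le_oplus_of_nonneg_left ha hau)

end PseudoMV

section Ideals

variable {α : Type*} [Lattice α] [AddGroup α] {u : α} {I A B : Set α}

lemma IsIdealIn.zero_mem (hI : IsIdealIn u (Icc 0 u) I) : (0 : α) ∈ I := by
  obtain ⟨x, hx⟩ := hI.2.1
  exact hI.2.2.1 x hx 0 ⟨le_rfl, (hI.1 hx).1.trans (hI.1 hx).2⟩ (hI.1 hx).1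

lemma IsIdealIn.unit_nonneg (hI : IsIdealIn u (Icc 0 u) I) : 0 ≤ u :=
  (hI.1 hI.zero_mem).2

lemma IsNormalIdealIn.exists_oplus_left_eq (hI : IsNormalIdealIn u (Icc 0 u) I) {x i : α}
    (hx : x ∈ Icc 0 u) (hi : i ∈ I) : ∃ i' ∈ I, oplus u x i = oplus u i' x := by
  obtain ⟨i', hi', h⟩ : oplus u x i ∈ (fun j => oplus u j x) '' I :=
    hI.2 x hx ▸ ⟨i, hi, rfl⟩
  exact ⟨i', hi', h.symm⟩

lemma IsNormalIdealIn.exists_oplus_right_eq (hI : IsNormalIdealIn u (Icc 0 u) I) {x i : α}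
    (hx : x ∈ Icc 0 u) (hi : i ∈ I) : ∃ i' ∈ I, oplus u i x = oplus u x i' := by
  obtain ⟨i', hi', h⟩ : oplus u i x ∈ (fun j => oplus u x j) '' I :=
    (hI.2 x hx).symm ▸ ⟨i, hi, rfl⟩
  exact ⟨i', hi', h.symm⟩

lemma normalGenIn_subset {C X J : Set α} (hJ : IsNormalIdealIn u C J) (hXJ : X ⊆ J) :
    normalGenIn u C X ⊆ J :=
  sInter_subset_of_mem ⟨hJ, hXJ⟩

lemma IsIdealIn.eq_dsetIn (hI : IsIdealIn u (Icc 0 u) I) {a : α} (ha : a ∈ I)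
    (hle : ∀ x ∈ I, x ≤ a) : I = dsetIn (Icc 0 u) a :=
  Subset.antisymm (fun x hx => ⟨hI.1 hx, hle x hx⟩) fun _ hx => hI.2.2.1 a ha _ hx.1 hx.2

lemma inf_eq_zero_of_inter_eq_singleton_zero (hA : IsIdealIn u (Icc 0 u) A)
    (hB : IsIdealIn u (Icc 0 u) B) (hAB : A ∩ B = {0}) {x y : α} (hx : x ∈ A) (hy : y ∈ B) :
    x ⊓ y = 0 := by
  have hxy : x ⊓ y ∈ Icc 0 u :=
    ⟨le_inf (hA.1 hx).1 (hB.1 hy).1, inf_le_left.trans (hA.1 hx).2⟩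
  have hmem : x ⊓ y ∈ A ∩ B :=
    ⟨hA.2.2.1 x hx _ hxy inf_le_left, hB.2.2.1 y hy _ hxy inf_le_right⟩
  rwa [hAB] at hmem

def idealSup (u : α) (A B : Set α) : Set α :=
  {x ∈ Icc 0 u | ∃ a ∈ A, ∃ b ∈ B, x ≤ oplus u a b}

variable [AddLeftMono α] [AddRightMono α]

lemma IsIdealIn.isNormalIdealIn (hI : IsIdealIn u (Icc 0 u) I)
    (hleft : ∀ x ∈ Icc 0 u, ∀ i ∈ I, ∃ c ∈ I, oplus u x i ≤ oplus u c x)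
    (hright : ∀ x ∈ Icc 0 u, ∀ i ∈ I, ∃ c ∈ I, oplus u i x ≤ oplus u x c) :
    IsNormalIdealIn u (Icc 0 u) I := by
  refine ⟨hI, fun x hx => Subset.antisymm ?_ ?_⟩
  · rintro _ ⟨i, hi, rfl⟩
    obtain ⟨c, hc, hle⟩ := hleft x hx i hi
    obtain ⟨j, hj, hjc, hjx⟩ :=
      exists_oplus_right_eq hx (le_oplus_of_nonneg_right hx.2 (hI.1 hi).1) hle
    exact ⟨j, hI.2.2.1 c hc j hj hjc, hjx⟩
  · rintro _ ⟨i, hi, rfl⟩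
    obtain ⟨c, hc, hle⟩ := hright x hx i hi
    obtain ⟨j, hj, hjc, hxj⟩ :=
      exists_oplus_left_eq hx (le_oplus_of_nonneg_left (hI.1 hi).1 hx.2) hle
    exact ⟨j, hI.2.2.1 c hc j hj hjc, hxj⟩

lemma exists_oplus_oplus_left_eq (hA : IsNormalIdealIn u (Icc 0 u) A)
    (hB : IsNormalIdealIn u (Icc 0 u) B) {x a b : α} (hx : x ∈ Icc 0 u) (ha : a ∈ A)
    (hb : b ∈ B) :
    ∃ a' ∈ A, ∃ b' ∈ B, oplus u x (oplus u a b) = oplus u (oplus u a' b') x := by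
  obtain ⟨a', ha', hxa⟩ := hA.exists_oplus_left_eq hx ha
  obtain ⟨b', hb', hxb⟩ := hB.exists_oplus_left_eq hx hb
  have ha'0 := (hA.1.1 ha').1
  have hb0 := (hB.1.1 hb).1
  refine ⟨a', ha', b', hb', ?_⟩
  calc oplus u x (oplus u a b) = oplus u (oplus u x a) b := (oplus_assoc_of_nonneg hx.1 hb0).symm
    _ = oplus u a' (oplus u x b) := by rw [hxa, oplus_assoc_of_nonneg ha'0 hb0]
    _ = oplus u (oplus u a' b') x := by rw [hxb, oplus_assoc_of_nonneg ha'0 hx.1]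

lemma exists_oplus_oplus_right_eq (hA : IsNormalIdealIn u (Icc 0 u) A)
    (hB : IsNormalIdealIn u (Icc 0 u) B) {x a b : α} (hx : x ∈ Icc 0 u) (ha : a ∈ A)
    (hb : b ∈ B) :
    ∃ a' ∈ A, ∃ b' ∈ B, oplus u (oplus u a b) x = oplus u x (oplus u a' b') := by
  obtain ⟨a', ha', hax⟩ := hA.exists_oplus_right_eq hx ha
  obtain ⟨b', hb', hbx⟩ := hB.exists_oplus_right_eq hx hb
  have ha0 := (hA.1.1 ha).1
  have hb'0 := (hB.1.1 hb').1
  refine ⟨a', ha', b', hb', ?_⟩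
  calc oplus u (oplus u a b) x = oplus u a (oplus u x b') := by
        rw [oplus_assoc_of_nonneg ha0 hx.1, hbx]
    _ = oplus u (oplus u x a') b' := by rw [← oplus_assoc_of_nonneg ha0 hb'0, hax]
    _ = oplus u x (oplus u a' b') := oplus_assoc_of_nonneg hx.1 hb'0

lemma isIdealIn_idealSup (hA : IsNormalIdealIn u (Icc 0 u) A)
    (hB : IsNormalIdealIn u (Icc 0 u) B) : IsIdealIn u (Icc 0 u) (idealSup u A B) := by
  have hu := hA.1.unit_nonneg
  refine ⟨fun x hx => hx.1, ⟨0, ⟨le_rfl, hu⟩, 0, hA.1.zero_mem, 0, hB.1.zero_mem,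
    (oplus_mem_Icc hu le_rfl le_rfl).1⟩, ?_, ?_⟩
  · rintro x ⟨-, a, ha, b, hb, hxab⟩ y hy hyx
    exact ⟨hy, a, ha, b, hb, hyx.trans hxab⟩
  · rintro x ⟨hx, a, ha, b, hb, hxab⟩ y ⟨hy, a', ha', b', hb', hyab⟩
    obtain ⟨b'', hb'', hba'⟩ := hB.exists_oplus_right_eq (hA.1.1 ha') hb
    have ha0 := (hA.1.1 ha).1
    have ha'0 := (hA.1.1 ha').1
    have hb'0 := (hB.1.1 hb').1
    refine ⟨oplus_mem_Icc hu hx.1 hy.1, oplus u a a', hA.1.2.2.2 a ha a' ha',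
      oplus u b'' b', hB.1.2.2.2 b'' hb'' b' hb', ?_⟩
    calc oplus u x y ≤ oplus u (oplus u a b) (oplus u a' b') := oplus_le_oplus hxab hyab
      _ = oplus u a (oplus u (oplus u b a') b') := by
        rw [oplus_assoc_of_nonneg ha0 (oplus_mem_Icc hu ha'0 hb'0).1,
          oplus_assoc_of_nonneg (hB.1.1 hb).1 hb'0]
      _ = oplus u (oplus u a a') (oplus u b'' b') := by
        rw [hba', oplus_assoc_of_nonneg ha'0 hb'0,
          oplus_assoc_of_nonneg ha0 (oplus_mem_Icc hu (hB.1.1 hb'').1 hb'0).1]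

lemma isNormalIdealIn_idealSup (hA : IsNormalIdealIn u (Icc 0 u) A)
    (hB : IsNormalIdealIn u (Icc 0 u) B) : IsNormalIdealIn u (Icc 0 u) (idealSup u A B) := by
  have hu := hA.1.unit_nonneg
  refine (isIdealIn_idealSup hA hB).isNormalIdealIn ?_ ?_
  · rintro x hx i ⟨-, a, ha, b, hb, hiab⟩
    obtain ⟨a', ha', b', hb', h⟩ := exists_oplus_oplus_left_eq hA hB hx ha hb
    exact ⟨oplus u a' b', ⟨oplus_mem_Icc hu (hA.1.1 ha').1 (hB.1.1 hb').1, a', ha', b', hb',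
      le_rfl⟩, h ▸ oplus_le_oplus le_rfl hiab⟩
  · rintro x hx i ⟨-, a, ha, b, hb, hiab⟩
    obtain ⟨a', ha', b', hb', h⟩ := exists_oplus_oplus_right_eq hA hB hx ha hb
    exact ⟨oplus u a' b', ⟨oplus_mem_Icc hu (hA.1.1 ha').1 (hB.1.1 hb').1, a', ha', b', hb',
      le_rfl⟩, h ▸ oplus_le_oplus hiab le_rfl⟩

lemma union_subset_idealSup (hA : IsIdealIn u (Icc 0 u) A) (hB : IsIdealIn u (Icc 0 u) B) :
    A ∪ B ⊆ idealSup u A B := by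
  rintro x (hx | hx)
  · exact ⟨hA.1 hx, x, hx, 0, hB.zero_mem, le_oplus_of_nonneg_right (hA.1 hx).2 le_rfl⟩
  · exact ⟨hB.1 hx, 0, hA.zero_mem, x, hx, le_oplus_of_nonneg_left le_rfl (hB.1 hx).2⟩

lemma exists_unit_le_add_of_normalGenIn_union_eq (hA : IsNormalIdealIn u (Icc 0 u) A)
    (hB : IsNormalIdealIn u (Icc 0 u) B) (hAB : normalGenIn u (Icc 0 u) (A ∪ B) = Icc 0 u) :
    ∃ a ∈ A, ∃ b ∈ B, u ≤ a + b := by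
  have hu : u ∈ normalGenIn u (Icc 0 u) (A ∪ B) := hAB.ge ⟨hA.1.unit_nonneg, le_rfl⟩
  obtain ⟨-, a, ha, b, hb, h⟩ :=
    normalGenIn_subset (isNormalIdealIn_idealSup hA hB) (union_subset_idealSup hA.1 hB.1) hu
  exact ⟨a, ha, b, hb, h.trans (oplus_le_add a b)⟩

end Ideals

theorem stmt8_general (u : G) (A : Set G)
    (hA : IsSummandIdealIn u (Set.Icc (0 : G) u) A) :
    ∃! a : G, a ∈ A ∧ IsBooleanIn u (Set.Icc (0 : G) u) a ∧ A = dsetIn (Set.Icc (0 : G) u) a := by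
  obtain ⟨hAn, B, hBn, hAB, hgen⟩ := hA
  obtain ⟨a, ha, b, hb, hu⟩ := exists_unit_le_add_of_normalGenIn_union_eq hAn hBn hgen
  have hdisj : ∀ x ∈ A, x ⊓ b = 0 := fun x hx =>
    inf_eq_zero_of_inter_eq_singleton_zero hAn.1 hBn.1 hAB hx hb
  have ha0 : 0 ≤ a := (hAn.1.1 ha).1
  have hAa : A = dsetIn (Icc 0 u) a := hAn.1.eq_dsetIn ha fun x hx =>
    le_of_le_add_of_inf_eq_zero ha0 ((hAn.1.1 hx).2.trans hu) (hdisj x hx)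
  have haBool : IsBooleanIn u (Icc 0 u) a :=
    ⟨hAn.1.1 ha, oplus_self_eq_self_of_le_add ha0 (hAn.1.1 ha).2 hu (hdisj a ha)⟩
  refine ⟨a, ⟨ha, haBool, hAa⟩, ?_⟩
  rintro a' ⟨ha', -, hAa'⟩
  exact le_antisymm (hAa ▸ ha').2 (hAa' ▸ ha).2

theorem stmt8 (u : G) (hu : IsStrongUnit u) (A : Set G)
    (hA : IsSummandIdealIn u (Set.Icc (0 : G) u) A) :
    ∃! a : G, a ∈ A ∧ IsBooleanIn u (Set.Icc (0 : G) u) a ∧ A = dsetIn (Set.Icc (0 : G) u) a :=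
  stmt8_general u A hA
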